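/- Let σ be an almost-sure policy with domain W (for data Q, ≤, F_1, F_{>0}, Δ). Then: (i) for every q ∈ W, for μ-almost every coin sequence b ∈ {0,1}^ℕ, the largest state occurring infinitely often in the trajectory from q driven by b belongs to F_1; and (ii) for every q ∈ F_{>0} ∩ W, the set of coin sequences b such that the trajectory from q driven by b stays in F_{>0} forever has positive μ-measure. -/

import Mathlib

open MeasureTheory

/-- The cylinder of a finite binary word `w`. -/
def cylinder (w : List Bool) : Set (ℕ → Bool) :=
  {b | ∀ i : Fin w.length, b i = w.get i}

/-- `μ` is the uniform probability measure on `{0,1}^ℕ`: the infinite product of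
fair-coin Bernoulli(1/2) measures. -/
def IsUniformBernoulli (μ : Measure (ℕ → Bool)) : Prop :=
  IsProbabilityMeasure μ ∧ ∀ w : List Bool, μ (cylinder w) = (2 : ENNReal)⁻¹ ^ w.length

/-- The trajectory from `q` driven by the coin sequence `b`. -/
def traj {Q : Type} (σ : Q → Q × Q) (q : Q) (b : ℕ → Bool) : ℕ → Q
  | 0 => q
  | i + 1 => if b i then (σ (traj σ q b i)).2 else (σ (traj σ q b i)).1

/-- A policy with domain `W`. -/
def IsPolicy {Q : Type} (Δ : Set (Q × Q × Q)) (W : Finset Q) (σ : Q → Q × Q) : Prop :=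
  ∀ q ∈ W, (q, (σ q).1, (σ q).2) ∈ Δ ∧ (σ q).1 ∈ W ∧ (σ q).2 ∈ W

/-- An ergodic class of the policy `σ` with domain `W`. -/
def IsErgodicClass {Q : Type} (W : Finset Q) (σ : Q → Q × Q) (C : Set Q) : Prop :=
  C.Nonempty ∧ C ⊆ (W : Set Q) ∧ (∀ q ∈ C, (σ q).1 ∈ C ∧ (σ q).2 ∈ C) ∧
    ∀ C' : Set Q, C' ⊆ C → C'.Nonempty →
      (∀ q ∈ C', (σ q).1 ∈ C' ∧ (σ q).2 ∈ C') → C' = C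

/-- An almost-sure policy. -/
def IsAlmostSurePolicy {Q : Type} [LinearOrder Q] (F1 F0 : Set Q)
    (Δ : Set (Q × Q × Q)) (W : Finset Q) (σ : Q → Q × Q) : Prop :=
  IsPolicy Δ W σ ∧
  (∀ C : Set Q, IsErgodicClass W σ C → ∃ m ∈ C, (∀ q ∈ C, q ≤ m) ∧ m ∈ F1) ∧
  (∀ q, q ∈ W → q ∈ F0 → ∃ (k : ℕ) (p : ℕ → Q), p 0 = q ∧
    (∀ i < k, p (i + 1) = (σ (p i)).1 ∨ p (i + 1) = (σ (p i)).2) ∧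
    (∀ i ≤ k, p i ∈ F0 ∧ p i ∈ W) ∧
    ∃ C : Set Q, IsErgodicClass W σ C ∧ C ⊆ F0 ∧ p k ∈ C)

/-!
For (ii), the finite path from `q` to an ergodic class inside `F_{>0}` is read on a cylinder of
positive measure, and since ergodic classes are closed the trajectory never leaves that class.

For (i), the point is that almost surely, after the visits of any state visited infinitely often,
every finite word `u` is read infinitely often. The sequences that miss `u` at the first `k` visits
to `a` after time `N` lie in the cylinders of a set of words whose weights `2^{-|w|}` sum to at
most `(1 - 2^{-|u|})^k`: between two visits, the words leading to the next visit of `a` form a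
prefix-free set, of total weight at most `1` by Kraft's inequality. Hence the set of states visited
infinitely often is closed under `σ`, and each of its states leads to every other one: it is an
ergodic class, so its maximum lies in `F_1`.
-/

open scoped ENNReal

namespace Policy

variable {Q : Type} {σ : Q → Q × Q}

section Words

variable (σ) in
def step (x : Q) (bit : Bool) : Q := if bit then (σ x).2 else (σ x).1

variable (σ) in
def run (x : Q) (w : List Bool) : Q := w.foldl (step σ) x

def block (b : ℕ → Bool) (t n : ℕ) : List Bool := List.ofFn fun i : Fin n => b (t + i)

@[simp] lemma length_block (b : ℕ → Bool) (t n : ℕ) : (block b t n).length = n := by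
  simp [block]

lemma block_add (b : ℕ → Bool) (t m n : ℕ) :
    block b t (m + n) = block b t m ++ block b (t + m) n := by
  simp only [block, List.ofFn_add, Fin.val_castLE, Fin.val_natAdd, Nat.add_assoc]

lemma take_block (b : ℕ → Bool) (t : ℕ) {m n : ℕ} (h : m ≤ n) :
    (block b t n).take m = block b t m := by
  obtain ⟨k, rfl⟩ := Nat.exists_eq_add_of_le h
  rw [block_add, List.take_left' (length_block ..)]

lemma run_append (x : Q) (v w : List Bool) : run σ x (v ++ w) = run σ (run σ x v) w :=
  List.foldl_append ..

lemma traj_add (q : Q) (b : ℕ → Bool) (t n : ℕ) :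
    traj σ q b (t + n) = run σ (traj σ q b t) (block b t n) := by
  induction n with
  | zero => rfl
  | succ n ih =>
    rw [block_add, run_append, ← ih]
    simp [traj, run, step, block]

lemma traj_eq_run (q : Q) (b : ℕ → Bool) (n : ℕ) : traj σ q b n = run σ q (block b 0 n) := by
  rw [← Nat.zero_add n, traj_add, Nat.zero_add]
  rfl

variable (σ) in
def IsClosedUnder (C : Set Q) : Prop := ∀ x ∈ C, (σ x).1 ∈ C ∧ (σ x).2 ∈ C

lemma IsClosedUnder.step_mem {C : Set Q} (hC : IsClosedUnder σ C) {x : Q} (hx : x ∈ C)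
    (bit : Bool) : step σ x bit ∈ C := by
  cases bit
  exacts [(hC x hx).1, (hC x hx).2]

lemma IsClosedUnder.run_mem {C : Set Q} (hC : IsClosedUnder σ C) {x : Q} (hx : x ∈ C)
    (w : List Bool) : run σ x w ∈ C := by
  induction w generalizing x with
  | nil => exact hx
  | cons bit w ih => exact ih (hC.step_mem hx bit)

lemma IsClosedUnder.traj_mem {C : Set Q} (hC : IsClosedUnder σ C) {q : Q} (hq : q ∈ C)
    (b : ℕ → Bool) (i : ℕ) : traj σ q b i ∈ C := by
  rw [traj_eq_run]
  exact hC.run_mem hq _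

end Words

section Cylinders

noncomputable def weight (w : List Bool) : ℝ≥0∞ := 2⁻¹ ^ w.length

lemma weight_append (v w : List Bool) : weight (v ++ w) = weight v * weight w := by
  simp [weight, pow_add]

lemma weight_pos (w : List Bool) : 0 < weight w :=
  ENNReal.pow_pos (ENNReal.inv_pos.2 ENNReal.ofNat_ne_top) _

lemma mem_cylinder_iff {b : ℕ → Bool} {w : List Bool} :
    b ∈ cylinder w ↔ block b 0 w.length = w := by
  rw [List.ext_get_iff]
  simp [_root_.cylinder, block, Fin.forall_iff]

lemma prefix_of_mem_cylinder {b : ℕ → Bool} {v w : List Bool} (hv : b ∈ cylinder v)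
    (hw : b ∈ cylinder w) (hle : v.length ≤ w.length) : v <+: w := by
  rw [mem_cylinder_iff] at hv hw
  rw [List.prefix_iff_eq_take, ← hw, take_block _ _ hle, hv]

lemma measurableSet_cylinder (w : List Bool) : MeasurableSet (cylinder w) := by
  simp only [_root_.cylinder, Set.ofPred_forall]
  exact .iInter fun i => measurableSet_eq_fun (measurable_pi_apply _) measurable_const

lemma pairwise_not_prefix_of_length_eq (n : ℕ) :
    {s : List Bool | s.length = n}.Pairwise fun v w => ¬ v <+: w :=
  fun _ hv _ hw hne hpre => hne (hpre.eq_of_length (hv.trans hw.symm))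

variable {μ : Measure (ℕ → Bool)} (hμ : IsUniformBernoulli μ)
include hμ

lemma measure_cylinder (w : List Bool) : μ (cylinder w) = weight w := hμ.2 w

lemma measure_iUnion_cylinder {A : Set (List Bool)} (hA : A.Pairwise fun v w => ¬ v <+: w) :
    μ (⋃ w : A, cylinder w) = ∑' w : A, weight w := by
  rw [measure_iUnion (f := fun w : A => cylinder w) ?_ fun w => measurableSet_cylinder w]
  · exact tsum_congr fun w => measure_cylinder hμ w
  intro v w hvw
  refine Set.disjoint_left.2 fun b hv hw => ?_
  have hne : (v : List Bool) ≠ w := Subtype.coe_injective.ne hvw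
  rcases le_total (v : List Bool).length (w : List Bool).length with hle | hle
  · exact hA v.2 w.2 hne (prefix_of_mem_cylinder hv hw hle)
  · exact hA w.2 v.2 hne.symm (prefix_of_mem_cylinder hw hv hle)

/-- Kraft's inequality. -/
lemma tsum_weight_le_one {A : Set (List Bool)} (hA : A.Pairwise fun v w => ¬ v <+: w) :
    ∑' w : A, weight w ≤ 1 := by
  have := hμ.1
  rw [← measure_iUnion_cylinder hμ hA]
  exact prob_le_one

lemma tsum_weight_ne_le (u : List Bool) :
    ∑' s : {s : List Bool | s.length = u.length ∧ s ≠ u}, weight s ≤ 1 - weight u := by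
  have := hμ.1
  rw [← measure_iUnion_cylinder hμ ((pairwise_not_prefix_of_length_eq u.length).mono
    fun _ hs => hs.1), ← measure_cylinder hμ u, ← prob_compl_eq_one_sub (measurableSet_cylinder u)]
  refine measure_mono (Set.iUnion_subset fun s b hs hu => ?_)
  exact s.2.2 ((prefix_of_mem_cylinder hs hu s.2.1.le).eq_of_length s.2.1)

end Cylinders

section EveryWordRecurs

variable (σ) in
def IsFirstHit (x a : Q) (c : List Bool) : Prop :=
  run σ x c = a ∧ ∀ c', c' <+: c → c' ≠ c → run σ x c' ≠ a

lemma pairwise_not_prefix_of_isFirstHit (x a : Q) :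
    {c | IsFirstHit σ x a c}.Pairwise fun v w => ¬ v <+: w :=
  fun _ hv _ hw hne hpre => hw.2 _ hpre hne hv.1

def appendSet (P : Set (List Bool)) (E : List Bool → Set (List Bool)) : Set (List Bool) :=
  {x | ∃ w ∈ P, ∃ c ∈ E w, x = w ++ c}

lemma tsum_weight_appendSet_le {P : Set (List Bool)} {E : List Bool → Set (List Bool)}
    {α β : ℝ≥0∞} (hP : ∑' w : P, weight w ≤ α) (hE : ∀ w ∈ P, ∑' c : E w, weight c ≤ β) :
    ∑' x : appendSet P E, weight x ≤ α * β := by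
  let f : (Σ w : P, E w) → appendSet P E := fun p => ⟨p.1 ++ p.2, p.1, p.1.2, p.2, p.2.2, rfl⟩
  have hf : Function.Surjective f := by
    rintro ⟨x, w, hw, c, hc, rfl⟩
    exact ⟨⟨⟨w, hw⟩, ⟨c, hc⟩⟩, rfl⟩
  calc ∑' x : appendSet P E, weight x ≤ ∑' p, weight (f p) :=
        ENNReal.tsum_le_tsum_comp_of_surjective hf _
    _ = ∑' w : P, weight w * ∑' c : E w, weight c := by
        simp only [ENNReal.tsum_sigma', f, weight_append, ENNReal.tsum_mul_left]
    _ ≤ ∑' w : P, weight w * β := ENNReal.tsum_le_tsum fun w => by gcongr; exact hE w w.2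
    _ = (∑' w : P, weight w) * β := ENNReal.tsum_mul_right
    _ ≤ α * β := by gcongr

variable (σ) in
/-- The prefixes `w₀ c₁ s₁ ⋯ cₖ sₖ` of the sequences that, at each of their first `k` visits
to `a` after time `N`, fail to read `u` next. -/
def badPrefixes (q a : Q) (u : List Bool) (N : ℕ) : ℕ → Set (List Bool)
  | 0 => {w | w.length = N}
  | k + 1 =>
    appendSet (appendSet (badPrefixes q a u N k) fun w => {c | IsFirstHit σ (run σ q w) a c})
      fun _ => {s | s.length = u.length ∧ s ≠ u}

lemma tsum_weight_badPrefixes_le {μ : Measure (ℕ → Bool)} (hμ : IsUniformBernoulli μ)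
    (q a : Q) (u : List Bool) (N k : ℕ) :
    ∑' w : badPrefixes σ q a u N k, weight w ≤ (1 - weight u) ^ k := by
  induction k with
  | zero =>
    rw [pow_zero]
    exact tsum_weight_le_one hμ (pairwise_not_prefix_of_length_eq N)
  | succ k ih =>
    rw [pow_succ, ← mul_one ((1 - weight u) ^ k)]
    exact tsum_weight_appendSet_le
      (tsum_weight_appendSet_le ih fun _ _ =>
        tsum_weight_le_one hμ (pairwise_not_prefix_of_isFirstHit ..))
      fun _ _ => tsum_weight_ne_le hμ u

lemma exists_mem_badPrefixes {q a : Q} {u : List Bool} {N : ℕ} {b : ℕ → Bool}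
    (hio : {t | traj σ q b t = a}.Infinite)
    (hno : ∀ t ≥ N, traj σ q b t = a → block b t u.length ≠ u) (k : ℕ) :
    ∃ w ∈ badPrefixes σ q a u N k, N ≤ w.length ∧ b ∈ cylinder w := by
  induction k with
  | zero => exact ⟨block b 0 N, length_block .., (length_block ..).ge, mem_cylinder_iff.2 (by simp)⟩
  | succ k ih =>
    classical
    obtain ⟨w, hw, hN, hbw⟩ := ih
    have hex : ∃ t, w.length ≤ t ∧ traj σ q b t = a := by
      obtain ⟨t, ht, hlt⟩ := hio.exists_gt w.length
      exact ⟨t, hlt.le, ht⟩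
    obtain ⟨hwt, hta⟩ := Nat.find_spec hex
    obtain ⟨d, hd⟩ := Nat.exists_eq_add_of_le hwt
    have hrun (j : ℕ) : run σ (run σ q w) (block b w.length j) = traj σ q b (w.length + j) := by
      rw [traj_add, traj_eq_run, mem_cylinder_iff.1 hbw]
    have hfirst : IsFirstHit σ (run σ q w) a (block b w.length d) := by
      refine ⟨by rw [hrun, ← hd, hta], fun c hpre hne hc => ?_⟩
      have hlt : c.length < d := by
        refine (hpre.length_le.trans_eq (length_block ..)).lt_of_ne fun h => hne ?_
        exact hpre.eq_of_length (h.trans (length_block ..).symm)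
      rw [List.prefix_iff_eq_take.1 hpre, take_block _ _ hlt.le, hrun] at hc
      exact Nat.find_min hex (by omega) ⟨by omega, hc⟩
    refine ⟨w ++ block b w.length d ++ block b (Nat.find hex) u.length,
      ⟨_, ⟨w, hw, _, hfirst, rfl⟩, _, ⟨length_block .., hno _ (by omega) hta⟩, rfl⟩,
      by simp only [List.length_append]; omega, ?_⟩
    rw [mem_cylinder_iff] at hbw ⊢
    simp only [List.length_append, length_block, block_add, Nat.zero_add, hbw, hd]

variable (σ) in
lemma ae_exists_block_eq {μ : Measure (ℕ → Bool)} (hμ : IsUniformBernoulli μ)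
    (q a : Q) (u : List Bool) (N : ℕ) :
    ∀ᵐ b ∂μ, {t | traj σ q b t = a}.Infinite →
      ∃ t ≥ N, traj σ q b t = a ∧ block b t u.length = u := by
  rw [ae_iff]
  have hE (k : ℕ) : μ {b | ¬ ({t | traj σ q b t = a}.Infinite →
      ∃ t ≥ N, traj σ q b t = a ∧ block b t u.length = u)} ≤ (1 - weight u) ^ k := by
    calc _ ≤ μ (⋃ w : badPrefixes σ q a u N k, cylinder w) := by
          refine measure_mono fun b hb => ?_
          push Not at hb
          obtain ⟨w, hw, -, hbw⟩ := exists_mem_badPrefixes hb.1 hb.2 k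
          exact Set.mem_iUnion.2 ⟨⟨w, hw⟩, hbw⟩
      _ ≤ ∑' w : badPrefixes σ q a u N k, μ (cylinder w) := measure_iUnion_le _
      _ = ∑' w : badPrefixes σ q a u N k, weight w :=
          tsum_congr fun w => measure_cylinder hμ w
      _ ≤ _ := tsum_weight_badPrefixes_le hμ q a u N k
  have hr : 1 - weight u < 1 :=
    ENNReal.sub_lt_self ENNReal.one_ne_top one_ne_zero (weight_pos u).ne'
  exact le_antisymm (ge_of_tendsto' (ENNReal.tendsto_pow_atTop_nhds_zero_of_lt_one hr) hE) bot_le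

end EveryWordRecurs

section VisitedInfOften

variable (σ) in
def visitedInfOften (q : Q) (b : ℕ → Bool) : Set Q := {x | {i | traj σ q b i = x}.Infinite}

lemma ae_forall_mem_visitedInfOften {μ : Measure (ℕ → Bool)} (hμ : IsUniformBernoulli μ)
    {W : Finset Q} (hW : IsClosedUnder σ W) {q : Q} (hq : q ∈ W) :
    ∀ᵐ b ∂μ, ∀ a ∈ visitedInfOften σ q b, ∀ (u : List Bool) (N : ℕ),
      ∃ t ≥ N, traj σ q b t = a ∧ block b t u.length = u := by
  filter_upwards [(Filter.eventually_all_finset W).2 fun a _ =>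
    ae_all_iff.2 fun u => ae_all_iff.2 fun N => ae_exists_block_eq σ hμ q a u N]
    with b hb a ha u N
  obtain ⟨t, ht⟩ := ha.nonempty
  exact hb a (ht ▸ hW.traj_mem hq b t) u N ha

variable {q : Q} {b : ℕ → Bool}
  (hb : ∀ a ∈ visitedInfOften σ q b, ∀ (u : List Bool) (N : ℕ),
    ∃ t ≥ N, traj σ q b t = a ∧ block b t u.length = u)
include hb

lemma run_mem_visitedInfOften {x : Q} (hx : x ∈ visitedInfOften σ q b) (u : List Bool) :
    run σ x u ∈ visitedInfOften σ q b := by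
  refine Set.infinite_of_forall_exists_gt fun N => ?_
  obtain ⟨t, htN, htx, htu⟩ := hb x hx u (N + 1)
  exact ⟨t + u.length, show traj σ q b (t + u.length) = _ by rw [traj_add, htx, htu], by omega⟩

lemma isErgodicClass_visitedInfOften {W : Finset Q} (hW : IsClosedUnder σ W) (hq : q ∈ W)
    (hne : (visitedInfOften σ q b).Nonempty) : IsErgodicClass W σ (visitedInfOften σ q b) := by
  refine ⟨hne, fun x hx => ?_, fun x hx => ⟨run_mem_visitedInfOften hb hx [false],
    run_mem_visitedInfOften hb hx [true]⟩, ?_⟩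
  · obtain ⟨t, ht⟩ := hx.nonempty
    exact ht ▸ hW.traj_mem hq b t
  · rintro C hCsub ⟨x, hx⟩ hC
    refine hCsub.antisymm fun r hr => ?_
    obtain ⟨s, hs⟩ := (hCsub hx).nonempty
    obtain ⟨t, ht, hst⟩ := hr.exists_gt s
    have hrun := traj_add (σ := σ) q b s (t - s)
    rw [Nat.add_sub_cancel' hst.le] at hrun
    rw [← ht.out, hrun, hs.out]
    exact IsClosedUnder.run_mem hC hx _

end VisitedInfOften

section Paths

lemma exists_cylinder_traj_eq {q : Q} {k : ℕ} {p : ℕ → Q} (hp0 : p 0 = q)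
    (hp : ∀ i < k, p (i + 1) = (σ (p i)).1 ∨ p (i + 1) = (σ (p i)).2) :
    ∃ w : List Bool, ∀ b ∈ cylinder w, ∀ i ≤ k, traj σ q b i = p i := by
  classical
  refine ⟨List.ofFn fun i : Fin k => decide (p (i + 1) ≠ (σ (p i)).1), fun b hb i hi => ?_⟩
  induction i with
  | zero => exact hp0.symm
  | succ i ih =>
    have hbi : b i = decide (p (i + 1) ≠ (σ (p i)).1) := by simpa using hb ⟨i, by simp; omega⟩
    simp only [traj, ih (by omega), hbi]
    by_cases h : p (i + 1) = (σ (p i)).1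
    · simp [h]
    · simp [h, ((hp i (by omega)).resolve_left h).symm]

lemma measure_pos_of_path {μ : Measure (ℕ → Bool)} (hμ : IsUniformBernoulli μ) {S C : Set Q}
    {q : Q} {k : ℕ} {p : ℕ → Q} (hp0 : p 0 = q)
    (hp : ∀ i < k, p (i + 1) = (σ (p i)).1 ∨ p (i + 1) = (σ (p i)).2)
    (hpS : ∀ i ≤ k, p i ∈ S) (hC : IsClosedUnder σ C) (hCS : C ⊆ S) (hpk : p k ∈ C) :
    0 < μ {b | ∀ i, traj σ q b i ∈ S} := by
  obtain ⟨w, hw⟩ := exists_cylinder_traj_eq hp0 hp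
  have hsub : cylinder w ⊆ {b | ∀ i, traj σ q b i ∈ S} := by
    intro b hb i
    rcases le_or_gt i k with hik | hki
    · exact hw b hb i hik ▸ hpS i hik
    · obtain ⟨d, rfl⟩ := Nat.exists_eq_add_of_le hki.le
      rw [traj_add, hw b hb k le_rfl]
      exact hCS (hC.run_mem hpk _)
  calc 0 < weight w := weight_pos w
    _ = μ (cylinder w) := (measure_cylinder hμ w).symm
    _ ≤ _ := measure_mono hsub

end Paths

end Policy

open Policy in
theorem stmt_11_general {Q : Type} [LinearOrder Q]
    (μ : Measure (ℕ → Bool)) (hμ : IsUniformBernoulli μ)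
    (F1 F0 : Set Q) (Δ : Set (Q × Q × Q)) (W : Finset Q) (σ : Q → Q × Q)
    (hσ : IsAlmostSurePolicy F1 F0 Δ W σ) :
    (∀ q ∈ W, ∀ᵐ b ∂μ, ∀ m : Q, {i : ℕ | traj σ q b i = m}.Infinite →
      (∀ q' : Q, {i : ℕ | traj σ q b i = q'}.Infinite → q' ≤ m) → m ∈ F1) ∧
    (∀ q ∈ W, q ∈ F0 → 0 < μ {b | ∀ i : ℕ, traj σ q b i ∈ F0}) := by
  obtain ⟨hpol, hmax, hreach⟩ := hσ
  have hW : IsClosedUnder σ W := fun x hx => (hpol x hx).2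
  refine ⟨fun q hq => ?_, fun q hq hq0 => ?_⟩
  · filter_upwards [ae_forall_mem_visitedInfOften hμ hW hq] with b hb m hm hdom
    obtain ⟨m', hm', hm'max, hm'F1⟩ := hmax _ (isErgodicClass_visitedInfOften hb hW hq ⟨m, hm⟩)
    rwa [le_antisymm (hm'max m hm) (hdom m' hm')]
  · obtain ⟨k, p, hp0, hp, hpF, C, hC, hCF0, hpk⟩ := hreach q hq hq0
    exact measure_pos_of_path hμ hp0 hp (fun i hi => (hpF i hi).1) hC.2.2.1 hCF0 hpk

/-- An almost-sure policy is almost-surely and positively winning: (i) from every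
state of its domain, almost surely the largest state visited infinitely often is
in `F1`; (ii) from every state of `F_{>0} ∩ W`, with positive probability the
trajectory stays in `F_{>0}` forever. -/
theorem stmt_11 {Q : Type} [Fintype Q] [LinearOrder Q]
    (μ : Measure (ℕ → Bool)) (hμ : IsUniformBernoulli μ)
    (F1 F0 : Set Q) (Δ : Set (Q × Q × Q)) (W : Finset Q) (σ : Q → Q × Q)
    (hσ : IsAlmostSurePolicy F1 F0 Δ W σ) :
    (∀ q ∈ W, ∀ᵐ b ∂μ, ∀ m : Q, {i : ℕ | traj σ q b i = m}.Infinite →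
      (∀ q' : Q, {i : ℕ | traj σ q b i = q'}.Infinite → q' ≤ m) → m ∈ F1) ∧
    (∀ q ∈ W, q ∈ F0 → 0 < μ {b | ∀ i : ℕ, traj σ q b i ∈ F0}) :=
  stmt_11_general μ hμ F1 F0 Δ W σ hσ
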